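/- arXiv:2110.05330 — 2 statements merged into one kernel-verified Lean document; each statement's English description precedes it below -/
import Mathlib

section
/- Let G = (N, E) be a finite directed graph with nonempty edge set E and no loop. Then there exist positive constants ξ_{ij} > 0, one for each edge (j, i) ∈ E, such that for all vectors σ ∈ ℝ^N: ∑_{(j,i)∈E} ξ_{ij}(σ_j − σ_i) = ∑_{(j,i)∈E_↑} ξ_{ij} σ_j − ∑_{(j,i)∈E_↓} ξ_{ij} σ_i, where E_↑ is the set of edges whose tail is a source and E_↓ is the set of edges whose head is a sink. -/
open scoped Classical

/-- A loop (elementary closed directed path of positive length). -/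
def HasLoop {n : ℕ} (E : Finset (Fin n × Fin n)) : Prop :=
  ∃ (l : ℕ) (f : ℕ → Fin n), 0 < l ∧ f 0 = f l ∧
    (∀ k1 k2, 1 ≤ k1 → k1 < k2 → k2 ≤ l → f k1 ≠ f k2) ∧
    ∀ k < l, (f k, f (k + 1)) ∈ E

section Aux

variable {n : ℕ}

/-- Any closed walk yields an elementary loop. -/
lemma loop_of_walk (E : Finset (Fin n × Fin n)) :
    ∀ l, ∀ f : ℕ → Fin n, 0 < l → f 0 = f l → (∀ k < l, (f k, f (k + 1)) ∈ E) →
      HasLoop E := by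
  intro l
  induction l using Nat.strong_induction_on with
  | _ l IH =>
    intro f hl h0 hedge
    by_cases hdist : ∀ k1 k2, 1 ≤ k1 → k1 < k2 → k2 ≤ l → f k1 ≠ f k2
    · exact ⟨l, f, hl, h0, hdist, hedge⟩
    · push_neg at hdist
      obtain ⟨k1, k2, h1, h12, h2l, heq⟩ := hdist
      refine IH (k2 - k1) (by omega) (fun k => f (k1 + k)) (by omega) ?_ ?_
      · show f (k1 + 0) = f (k1 + (k2 - k1))
        have h3 : k1 + (k2 - k1) = k2 := by omega
        rw [Nat.add_zero, h3, heq]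
      · intro k hk
        have h4 := hedge (k1 + k) (by omega)
        show (f (k1 + k), f (k1 + (k + 1))) ∈ E
        have h3 : k1 + (k + 1) = k1 + k + 1 := by omega
        rw [h3]
        exact h4

lemma transGen_walk (E : Finset (Fin n × Fin n)) {a b : Fin n}
    (h : Relation.TransGen (fun j v : Fin n => (j, v) ∈ E) a b) :
    ∃ (l : ℕ) (f : ℕ → Fin n), 0 < l ∧ f 0 = a ∧ f l = b ∧
      ∀ k < l, (f k, f (k + 1)) ∈ E := by
  induction h with
  | @single c hr =>
    exact ⟨1, fun k => if k = 0 then a else c, one_pos, by simp, by simp, by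
      intro k hk
      interval_cases k
      simpa using hr⟩
  | @tail b c _ hr IH =>
    obtain ⟨l, f, hl, h0, hlast, hedge⟩ := IH
    refine ⟨l + 1, fun k => if k ≤ l then f k else c, by omega, by simp [h0, hl.le], by simp, ?_⟩
    intro k hk
    show (if k ≤ l then f k else c, if k + 1 ≤ l then f (k + 1) else c) ∈ E
    by_cases hkl : k < l
    · rw [if_pos (by omega : k ≤ l), if_pos (by omega : k + 1 ≤ l)]
      exact hedge k hkl
    · have hkeq : k = l := by omega
      rw [if_pos (by omega : k ≤ l), if_neg (by omega : ¬ k + 1 ≤ l), hkeq, hlast]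
      exact hr

lemma wf_in (E : Finset (Fin n × Fin n)) (hloop : ¬ HasLoop E) :
    WellFounded (fun j v : Fin n => (j, v) ∈ E) := by
  set r : Fin n → Fin n → Prop := fun j v => (j, v) ∈ E with hr
  have hirr : IsIrrefl (Fin n) (Relation.TransGen r) := by
    constructor
    intro a ha
    obtain ⟨l, f, hl, h0, hlast, hedge⟩ := transGen_walk E ha
    exact hloop (loop_of_walk E l f hl (by rw [h0, hlast]) hedge)
  have htr : IsTrans (Fin n) (Relation.TransGen r) := ⟨fun _ _ _ => Relation.TransGen.trans⟩
  exact Subrelation.wf (fun h => Relation.TransGen.single h)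
    (Finite.wellFounded_of_trans_of_irrefl (Relation.TransGen r))

lemma wf_out (E : Finset (Fin n × Fin n)) (hloop : ¬ HasLoop E) :
    WellFounded (fun i v : Fin n => (v, i) ∈ E) := by
  have h := wf_in E hloop
  have hirr : IsIrrefl (Fin n) (Relation.TransGen (fun i v : Fin n => (v, i) ∈ E)) := by
    constructor
    intro a ha
    have : Relation.TransGen (fun j v : Fin n => (j, v) ∈ E) a a := by
      have := (Relation.transGen_swap
        (r := fun j v : Fin n => (j, v) ∈ E) (a := a) (b := a)).mp ?_
      · exact this
      · exact ha
    obtain ⟨l, f, hl, h0, hlast, hedge⟩ := transGen_walk E this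
    exact hloop (loop_of_walk E l f hl (by rw [h0, hlast]) hedge)
  have htr : IsTrans (Fin n) (Relation.TransGen (fun i v : Fin n => (v, i) ∈ E)) :=
    ⟨fun _ _ _ => Relation.TransGen.trans⟩
  exact Subrelation.wf (fun h => Relation.TransGen.single h)
    (Finite.wellFounded_of_trans_of_irrefl
      (Relation.TransGen (fun i v : Fin n => (v, i) ∈ E)))

/-- Number of paths from some source ending at `v`. -/
noncomputable def Pfun (E : Finset (Fin n × Fin n)) (hloop : ¬ HasLoop E) : Fin n → ℕ :=
  (wf_in E hloop).fix (fun v rec =>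
    if (∀ j, (j, v) ∉ E) then 1
    else ∑ e ∈ (E.filter (fun e => e.2 = v)).attach,
      rec e.1.1 (by
        obtain ⟨⟨j, w⟩, hmem⟩ := e
        simp only [Finset.mem_filter] at hmem
        show (j, v) ∈ E
        exact hmem.2 ▸ hmem.1))

lemma Pfun_eq (E : Finset (Fin n × Fin n)) (hloop : ¬ HasLoop E) (v : Fin n) :
    Pfun E hloop v = if ∀ j, (j, v) ∉ E then 1
      else ∑ e ∈ E.filter (fun e => e.2 = v), Pfun E hloop e.1 := by
  conv_lhs => rw [Pfun, WellFounded.fix_eq]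
  rw [← Finset.sum_attach (E.filter (fun e => e.2 = v)) (fun e => Pfun E hloop e.1)]
  simp only []
  split
  · rfl
  · apply Finset.sum_congr rfl
    intro e _
    rfl

/-- Number of paths from `v` ending at some sink. -/
noncomputable def Qfun (E : Finset (Fin n × Fin n)) (hloop : ¬ HasLoop E) : Fin n → ℕ :=
  (wf_out E hloop).fix (fun v rec =>
    if (∀ i, (v, i) ∉ E) then 1
    else ∑ e ∈ (E.filter (fun e => e.1 = v)).attach,
      rec e.1.2 (by
        obtain ⟨⟨j, w⟩, hmem⟩ := e
        simp only [Finset.mem_filter] at hmem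
        show (v, w) ∈ E
        exact hmem.2 ▸ hmem.1))

lemma Qfun_eq (E : Finset (Fin n × Fin n)) (hloop : ¬ HasLoop E) (v : Fin n) :
    Qfun E hloop v = if ∀ i, (v, i) ∉ E then 1
      else ∑ e ∈ E.filter (fun e => e.1 = v), Qfun E hloop e.2 := by
  conv_lhs => rw [Qfun, WellFounded.fix_eq]
  rw [← Finset.sum_attach (E.filter (fun e => e.1 = v)) (fun e => Qfun E hloop e.2)]
  simp only []
  split
  · rfl
  · apply Finset.sum_congr rfl
    intro e _
    rfl

lemma Pfun_pos (E : Finset (Fin n × Fin n)) (hloop : ¬ HasLoop E) (v : Fin n) :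
    1 ≤ Pfun E hloop v := by
  induction v using (wf_in E hloop).induction with
  | _ v IH =>
    rw [Pfun_eq]
    split
    · exact le_refl 1
    · next h =>
      push_neg at h
      obtain ⟨j, hj⟩ := h
      have hmem : (j, v) ∈ E.filter (fun e => e.2 = v) := by
        simp [Finset.mem_filter, hj]
      calc 1 ≤ Pfun E hloop (j, v).1 := IH j hj
        _ ≤ _ := Finset.single_le_sum (f := fun e => Pfun E hloop e.1)
          (fun _ _ => Nat.zero_le _) hmem

lemma Qfun_pos (E : Finset (Fin n × Fin n)) (hloop : ¬ HasLoop E) (v : Fin n) :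
    1 ≤ Qfun E hloop v := by
  induction v using (wf_out E hloop).induction with
  | _ v IH =>
    rw [Qfun_eq]
    split
    · exact le_refl 1
    · next h =>
      push_neg at h
      obtain ⟨i, hi⟩ := h
      have hmem : (v, i) ∈ E.filter (fun e => e.1 = v) := by
        simp [Finset.mem_filter, hi]
      calc 1 ≤ Qfun E hloop (v, i).2 := IH i hi
        _ ≤ _ := Finset.single_le_sum (f := fun e => Qfun E hloop e.2)
          (fun _ _ => Nat.zero_le _) hmem

end Aux

/-- In a finite loop-free directed graph with nonempty edge set there are positive edge
weights `ξ` such that for every node vector `σ`, the weighted sum of the edge differences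
`σ_j - σ_i` equals the corresponding sum over the edges leaving sources minus the sum over
the edges entering sinks. -/
theorem stmt1 {n : ℕ} (E : Finset (Fin n × Fin n)) (hE : E.Nonempty)
    (hloop : ¬ HasLoop E) :
    ∃ ξ : Fin n × Fin n → ℝ, (∀ e ∈ E, 0 < ξ e) ∧
      ∀ σ : Fin n → ℝ,
        ∑ e ∈ E, ξ e * (σ e.1 - σ e.2) =
          (∑ e ∈ E, if (∀ i, (i, e.1) ∉ E) then ξ e * σ e.1 else 0) -
          (∑ e ∈ E, if (∀ l, (e.2, l) ∉ E) then ξ e * σ e.2 else 0) := by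
  classical
  set P := Pfun E hloop with hP
  set Q := Qfun E hloop with hQ
  set ξ : Fin n × Fin n → ℝ := fun e => (P e.1 : ℝ) * (Q e.2 : ℝ) with hξ
  refine ⟨ξ, ?_, ?_⟩
  · intro e he
    have h1 : (1 : ℝ) ≤ P e.1 := by exact_mod_cast Pfun_pos E hloop e.1
    have h2 : (1 : ℝ) ≤ Q e.2 := by exact_mod_cast Qfun_pos E hloop e.2
    have : (0:ℝ) < (P e.1 : ℝ) := lt_of_lt_of_le one_pos h1
    have : (0:ℝ) < (Q e.2 : ℝ) := lt_of_lt_of_le one_pos h2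
    positivity
  · intro σ
    set outw : Fin n → ℝ := fun v => ∑ e ∈ E.filter (fun e => e.1 = v), ξ e with houtw
    set inw : Fin n → ℝ := fun v => ∑ e ∈ E.filter (fun e => e.2 = v), ξ e with hinw
    have hfst : ∀ (e : Fin n × Fin n) (v : Fin n), e ∈ E → e.1 = v → (v, e.2) ∈ E := by
      intro e v he h1
      rw [← h1]
      exact he
    have hsnd : ∀ (e : Fin n × Fin n) (v : Fin n), e ∈ E → e.2 = v → (e.1, v) ∈ E := by
      intro e v he h2
      rw [← h2]
      exact he
    have hout0 : ∀ v, (∀ l, (v, l) ∉ E) → outw v = 0 := by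
      intro v hv
      apply Finset.sum_eq_zero
      intro e he
      simp only [Finset.mem_filter] at he
      exact absurd (hfst e v he.1 he.2) (hv e.2)
    have hin0 : ∀ v, (∀ j, (j, v) ∉ E) → inw v = 0 := by
      intro v hv
      apply Finset.sum_eq_zero
      intro e he
      simp only [Finset.mem_filter] at he
      exact absurd (hsnd e v he.1 he.2) (hv e.1)
    have houtPQ : ∀ v, ¬ (∀ l, (v, l) ∉ E) → outw v = (P v : ℝ) * (Q v : ℝ) := by
      intro v hv
      have hQv : (Q v : ℝ) = ∑ e ∈ E.filter (fun e => e.1 = v), (Q e.2 : ℝ) := by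
        rw [hQ, Qfun_eq E hloop v, if_neg hv]
        push_cast
        rfl
      rw [houtw]
      simp only [hξ]
      calc ∑ e ∈ E.filter (fun e => e.1 = v), (P e.1 : ℝ) * (Q e.2 : ℝ)
          = ∑ e ∈ E.filter (fun e => e.1 = v), (P v : ℝ) * (Q e.2 : ℝ) := by
            apply Finset.sum_congr rfl
            intro e he
            simp only [Finset.mem_filter] at he
            rw [he.2]
        _ = (P v : ℝ) * ∑ e ∈ E.filter (fun e => e.1 = v), (Q e.2 : ℝ) := by
            rw [Finset.mul_sum]
        _ = (P v : ℝ) * (Q v : ℝ) := by rw [← hQv]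
    have hinPQ : ∀ v, ¬ (∀ j, (j, v) ∉ E) → inw v = (P v : ℝ) * (Q v : ℝ) := by
      intro v hv
      have hPv : (P v : ℝ) = ∑ e ∈ E.filter (fun e => e.2 = v), (P e.1 : ℝ) := by
        rw [hP, Pfun_eq E hloop v, if_neg hv]
        push_cast
        rfl
      rw [hinw]
      simp only [hξ]
      calc ∑ e ∈ E.filter (fun e => e.2 = v), (P e.1 : ℝ) * (Q e.2 : ℝ)
          = ∑ e ∈ E.filter (fun e => e.2 = v), (P e.1 : ℝ) * (Q v : ℝ) := by
            apply Finset.sum_congr rfl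
            intro e he
            simp only [Finset.mem_filter] at he
            rw [he.2]
        _ = (∑ e ∈ E.filter (fun e => e.2 = v), (P e.1 : ℝ)) * (Q v : ℝ) := by
            rw [Finset.sum_mul]
        _ = (P v : ℝ) * (Q v : ℝ) := by rw [← hPv]
    -- regroup all four sums by vertex
    have grp1 : ∑ e ∈ E, ξ e * σ e.1
        = ∑ v : Fin n, outw v * σ v := by
      rw [← Finset.sum_fiberwise_of_maps_to (fun e _ => Finset.mem_univ e.1)
        (fun e => ξ e * σ e.1)]
      apply Finset.sum_congr rfl
      intro v _
      rw [houtw]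
      simp only []
      rw [Finset.sum_mul]
      apply Finset.sum_congr rfl
      intro e he
      simp only [Finset.mem_filter] at he
      rw [he.2]
    have grp2 : ∑ e ∈ E, ξ e * σ e.2
        = ∑ v : Fin n, inw v * σ v := by
      rw [← Finset.sum_fiberwise_of_maps_to (fun e _ => Finset.mem_univ e.2)
        (fun e => ξ e * σ e.2)]
      apply Finset.sum_congr rfl
      intro v _
      rw [hinw]
      simp only []
      rw [Finset.sum_mul]
      apply Finset.sum_congr rfl
      intro e he
      simp only [Finset.mem_filter] at he
      rw [he.2]
    have grp3 : (∑ e ∈ E, if (∀ i, (i, e.1) ∉ E) then ξ e * σ e.1 else 0)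
        = ∑ v : Fin n, (if (∀ i, (i, v) ∉ E) then outw v * σ v else 0) := by
      rw [← Finset.sum_fiberwise_of_maps_to (fun e _ => Finset.mem_univ e.1)
        (fun e => if (∀ i, (i, e.1) ∉ E) then ξ e * σ e.1 else 0)]
      apply Finset.sum_congr rfl
      intro v _
      by_cases hsrc : ∀ i, (i, v) ∉ E
      · rw [if_pos hsrc, houtw]
        simp only []
        rw [Finset.sum_mul]
        apply Finset.sum_congr rfl
        intro e he
        simp only [Finset.mem_filter] at he
        rw [he.2, if_pos hsrc]
      · rw [if_neg hsrc]
        apply Finset.sum_eq_zero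
        intro e he
        simp only [Finset.mem_filter] at he
        rw [he.2, if_neg hsrc]
    have grp4 : (∑ e ∈ E, if (∀ l, (e.2, l) ∉ E) then ξ e * σ e.2 else 0)
        = ∑ v : Fin n, (if (∀ l, (v, l) ∉ E) then inw v * σ v else 0) := by
      rw [← Finset.sum_fiberwise_of_maps_to (fun e _ => Finset.mem_univ e.2)
        (fun e => if (∀ l, (e.2, l) ∉ E) then ξ e * σ e.2 else 0)]
      apply Finset.sum_congr rfl
      intro v _
      by_cases hsink : ∀ l, (v, l) ∉ E
      · rw [if_pos hsink, hinw]
        simp only []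
        rw [Finset.sum_mul]
        apply Finset.sum_congr rfl
        intro e he
        simp only [Finset.mem_filter] at he
        rw [he.2, if_pos hsink]
      · rw [if_neg hsink]
        apply Finset.sum_eq_zero
        intro e he
        simp only [Finset.mem_filter] at he
        rw [he.2, if_neg hsink]
    have key : ∀ v : Fin n, outw v * σ v - inw v * σ v
        = (if (∀ i, (i, v) ∉ E) then outw v * σ v else 0)
          - (if (∀ l, (v, l) ∉ E) then inw v * σ v else 0) := by
      intro v
      by_cases hsrc : ∀ i, (i, v) ∉ E <;> by_cases hsink : ∀ l, (v, l) ∉ E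
      · rw [if_pos hsrc, if_pos hsink, hin0 v hsrc, hout0 v hsink]
      · rw [if_pos hsrc, if_neg hsink, hin0 v hsrc]; ring
      · rw [if_neg hsrc, if_pos hsink, hout0 v hsink]; ring
      · rw [if_neg hsrc, if_neg hsink, houtPQ v hsink, hinPQ v hsrc]; ring
    calc ∑ e ∈ E, ξ e * (σ e.1 - σ e.2)
        = (∑ e ∈ E, ξ e * σ e.1) - (∑ e ∈ E, ξ e * σ e.2) := by
          rw [← Finset.sum_sub_distrib]
          apply Finset.sum_congr rfl
          intros
          ring
      _ = ∑ v : Fin n, (outw v * σ v - inw v * σ v) := by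
          rw [grp1, grp2, Finset.sum_sub_distrib]
      _ = (∑ e ∈ E, if (∀ i, (i, e.1) ∉ E) then ξ e * σ e.1 else 0) -
          (∑ e ∈ E, if (∀ l, (e.2, l) ∉ E) then ξ e * σ e.2 else 0) := by
          rw [grp3, grp4, ← Finset.sum_sub_distrib]
          exact Finset.sum_congr rfl (fun v _ => key v)
end

section
/- Suppose a system ẋ = F(t, x, u) is ISS with (β, γ̂) for a closed set A, i.e., ‖x(t)‖_A ≤ β(‖x(t_0)‖_A, t − t_0) + γ̂(sup_{s∈[t_0,t)} ‖u(s)‖_∞) for all t ≥ t_0. Then for any M_{x_0} > 0, M_u > 0, and any decreasing function w : [0, ∞) → (0, 1] with lim_{t→∞} w(t) = 0, there exists γ ∈ 𝒦_∞ such that every solution x with ‖x(t_0)‖_A ≤ M_{x_0} and sup_{s∈[t_0,t)} ‖u(s)‖_∞ ≤ M_u satisfies ‖x(t)‖_A ≤ β(‖x(t_0)‖_A, t − t_0) + γ(δ_t) for all t > t_0, where δ_t := sup_{s∈[t_0,t)} ‖u(s)‖_∞ · w(t − s). -/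
/-!
Let `B = β(M_{x₀}, 0) + γ̂(M_u)`, an a-priori bound on `‖x(s)‖_A`. If `δ = δ_t > 0`, then
`‖u(s)‖ w(t - s) ≤ δ` forces `‖u(s)‖ ≤ √δ` wherever `w(t - s) ≥ √δ`, that is on a final window
of length `T = decayTime w √δ`, and `T → ∞` as `δ → 0`. Restarting the ISS estimate at
`max t₀ (t - T/2)` gives `‖x(t)‖_A ≤ β(‖x(t₀)‖_A, t - t₀) + β(B, T/2) + γ̂(√δ)`. The last two
terms are nondecreasing in `δ` and vanish as `δ → 0⁺`, and such a function `H`, extended by 0 to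
`δ ≤ 0`, is dominated by the `𝒦_∞` function `δ ↦ δ + ∫₁² H(δv) dv`. When `δ = 0` the input
vanishes on `[t₀, t)`.
-/

open Filter

/-- Class 𝒦_∞: continuous, strictly increasing and unbounded on `[0, ∞)`, vanishing at 0. -/
def ClassKinf (γ : ℝ → ℝ) : Prop :=
  ContinuousOn γ (Set.Ici 0) ∧ StrictMonoOn γ (Set.Ici 0) ∧ γ 0 = 0 ∧
    Tendsto γ atTop atTop

/-- Class 𝒦𝓛: class 𝒦 in the first argument for each fixed time, decreasing to 0 in the
second argument, and nonnegative. -/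
def ClassKL (β : ℝ → ℝ → ℝ) : Prop :=
  (∀ t ∈ Set.Ici (0 : ℝ), ContinuousOn (fun r => β r t) (Set.Ici 0) ∧
      StrictMonoOn (fun r => β r t) (Set.Ici 0) ∧ β 0 t = 0) ∧
  (∀ r > (0 : ℝ), AntitoneOn (β r) (Set.Ici 0) ∧ Tendsto (β r) atTop (nhds 0)) ∧
  (∀ r ≥ (0 : ℝ), ∀ t ≥ (0 : ℝ), 0 ≤ β r t)

open Set Topology

namespace ClassKinf

variable {γ : ℝ → ℝ}

theorem monotoneOn (hγ : ClassKinf γ) : MonotoneOn γ (Ici 0) :=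
  hγ.2.1.monotoneOn

theorem apply_zero (hγ : ClassKinf γ) : γ 0 = 0 :=
  hγ.2.2.1

theorem nonneg (hγ : ClassKinf γ) {r : ℝ} (hr : 0 ≤ r) : 0 ≤ γ r :=
  hγ.apply_zero ▸ hγ.monotoneOn self_mem_Ici hr hr

theorem apply_sSup_le (hγ : ClassKinf γ) {S : Set ℝ} {C : ℝ} (hS : ∀ x ∈ S, 0 ≤ x)
    (hSC : ∀ x ∈ S, x ≤ C) (hC : 0 ≤ C) : γ (sSup S) ≤ γ C :=
  hγ.monotoneOn (Real.sSup_nonneg hS) hC (Real.sSup_le hSC hC)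

end ClassKinf

namespace ClassKL

variable {β : ℝ → ℝ → ℝ}

theorem monotoneOn_left (hβ : ClassKL β) {t : ℝ} (ht : 0 ≤ t) :
    MonotoneOn (fun r => β r t) (Ici 0) :=
  (hβ.1 t ht).2.1.monotoneOn

theorem antitoneOn_right (hβ : ClassKL β) {r : ℝ} (hr : 0 < r) : AntitoneOn (β r) (Ici 0) :=
  (hβ.2.1 r hr).1

theorem tendsto_atTop (hβ : ClassKL β) {r : ℝ} (hr : 0 < r) : Tendsto (β r) atTop (𝓝 0) :=
  (hβ.2.1 r hr).2

theorem nonneg (hβ : ClassKL β) {r t : ℝ} (hr : 0 ≤ r) (ht : 0 ≤ t) : 0 ≤ β r t :=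
  hβ.2.2 r hr t ht

theorem pos (hβ : ClassKL β) {r : ℝ} (hr : 0 < r) : 0 < β r 0 := by
  have h := (hβ.1 0 self_mem_Ici).2.1 self_mem_Ici hr.le hr
  simp only [(hβ.1 0 self_mem_Ici).2.2] at h
  exact h

end ClassKL

section Majorant

open MeasureTheory intervalIntegral

variable {H : ℝ → ℝ}

theorem le_integral_comp_mul (hH : Monotone H) {δ : ℝ} (hδ : 0 ≤ δ) :
    H δ ≤ ∫ v in (1 : ℝ)..2, H (δ * v) := by
  have := integral_mono_on one_le_two intervalIntegrable_const
    (hH.comp (monotone_mul_left_of_nonneg hδ)).intervalIntegrable (μ := volume)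
    fun v hv => hH (le_mul_of_one_le_right hδ hv.1)
  norm_num at this
  exact this

theorem integral_comp_mul_le (hH : Monotone H) {δ : ℝ} (hδ : 0 ≤ δ) :
    ∫ v in (1 : ℝ)..2, H (δ * v) ≤ H (2 * δ) := by
  have := integral_mono_on one_le_two
    (hH.comp (monotone_mul_left_of_nonneg hδ)).intervalIntegrable (μ := volume)
    intervalIntegrable_const
    fun v hv => hH (by nlinarith [hv.2] : δ * v ≤ 2 * δ)
  norm_num at this
  exact this

theorem monotoneOn_integral_comp_mul (hH : Monotone H) :
    MonotoneOn (fun δ => ∫ v in (1 : ℝ)..2, H (δ * v)) (Ici 0) := fun _ ha _ hb hab =>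
  integral_mono_on one_le_two
    (hH.comp (monotone_mul_left_of_nonneg ha)).intervalIntegrable (μ := volume)
    (hH.comp (monotone_mul_left_of_nonneg hb)).intervalIntegrable
    fun _ hv => hH (mul_le_mul_of_nonneg_right hab (zero_le_one.trans hv.1))

theorem integral_comp_mul_eq_inv_mul_primitive_sub (hH : ∀ a b, IntervalIntegrable H volume a b)
    {δ : ℝ} (hδ : δ ≠ 0) :
    ∫ v in (1 : ℝ)..2, H (δ * v) =
      δ⁻¹ * ((∫ s in (0 : ℝ)..2 * δ, H s) - ∫ s in (0 : ℝ)..δ, H s) := by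
  rw [integral_comp_mul_left H hδ, integral_interval_sub_left (hH _ _) (hH _ _), mul_one,
    mul_comm δ 2, smul_eq_mul]

theorem continuousOn_integral_comp_mul (hH : Monotone H)
    (h0 : ContinuousWithinAt H (Ici 0) 0) :
    ContinuousOn (fun δ => ∫ v in (1 : ℝ)..2, H (δ * v)) (Ici 0) := by
  intro x hx
  rcases (mem_Ici.mp hx).eq_or_lt with rfl | hx
  · show Tendsto _ _ (𝓝 (∫ v in (1 : ℝ)..2, H (0 * v)))
    have h2 : Tendsto (fun δ => H (2 * δ)) (𝓝[≥] 0) (𝓝 (H 0)) :=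
      h0.tendsto.comp <| tendsto_nhdsWithin_of_tendsto_nhds_of_eventually_within _
        (((continuous_const_mul 2).tendsto' 0 0 (mul_zero 2)).mono_left nhdsWithin_le_nhds)
        (eventually_nhdsWithin_of_forall fun δ (hδ : 0 ≤ δ) => mul_nonneg zero_le_two hδ)
    rw [show ∫ v in (1 : ℝ)..2, H (0 * v) = H 0 by norm_num]
    refine tendsto_of_tendsto_of_tendsto_of_le_of_le' h0.tendsto h2 ?_ ?_ <;>
      filter_upwards [self_mem_nhdsWithin] with δ hδ
    · exact le_integral_comp_mul hH hδ
    · exact integral_comp_mul_le hH hδ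
  · have hint : ∀ a b, IntervalIntegrable H volume a b := fun _ _ => hH.intervalIntegrable
    have hG : Continuous fun y => ∫ s in (0 : ℝ)..y, H s := continuous_primitive hint 0
    refine ContinuousAt.continuousWithinAt (ContinuousAt.congr ?_ (eventually_ne_nhds hx.ne' |>.mono
      fun δ hδ => (integral_comp_mul_eq_inv_mul_primitive_sub hint hδ).symm))
    exact (continuousAt_inv₀ hx.ne').mul
      ((hG.comp (continuous_const_mul 2)).sub hG).continuousAt

theorem exists_classKinf_ge_of_monotone (hH : Monotone H) (hH0 : H 0 = 0)
    (h0 : ContinuousWithinAt H (Ici 0) 0) : ∃ γ, ClassKinf γ ∧ ∀ δ ≥ 0, H δ ≤ γ δ := by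
  set Φ := fun δ => ∫ v in (1 : ℝ)..2, H (δ * v)
  have hΦ_nonneg : ∀ δ ≥ 0, 0 ≤ Φ δ := fun δ hδ =>
    hH0 ▸ (hH hδ).trans (le_integral_comp_mul hH hδ)
  refine ⟨fun δ => δ + Φ δ, ⟨continuousOn_id.add (continuousOn_integral_comp_mul hH h0),
    fun _ ha _ hb hab => add_lt_add_of_lt_of_le hab (monotoneOn_integral_comp_mul hH ha hb hab.le),
    by simp [Φ, hH0], ?_⟩, fun δ hδ => ?_⟩
  · refine tendsto_atTop_mono' atTop ?_ tendsto_id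
    filter_upwards [eventually_ge_atTop 0] with δ hδ
    exact le_add_of_nonneg_right (hΦ_nonneg δ hδ)
  · exact (le_integral_comp_mul hH hδ).trans (le_add_of_nonneg_left hδ)

theorem exists_classKinf_ge_of_monotoneOn_Ioi (hH : MonotoneOn H (Ioi 0))
    (h0 : Tendsto H (𝓝[>] 0) (𝓝 0)) : ∃ γ, ClassKinf γ ∧ ∀ δ > 0, H δ ≤ γ δ := by
  have hH_nonneg : ∀ x > 0, 0 ≤ H x := fun x hx =>
    le_of_tendsto h0 (mem_of_superset (Ioo_mem_nhdsGT hx) fun _ hy => hH hy.1 hx hy.2.le)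
  have hH' : Monotone ((Ioi (0 : ℝ)).indicator H) := by
    intro a b hab
    simp only [indicator, mem_Ioi]
    split_ifs with ha hb hb
    · exact hH ha hb hab
    · exact absurd (ha.trans_le hab) hb
    · exact hH_nonneg b hb
    · rfl
  have hH'0 : (Ioi (0 : ℝ)).indicator H 0 = 0 := indicator_of_notMem (lt_irrefl 0) H
  have h0' : ContinuousWithinAt ((Ioi (0 : ℝ)).indicator H) (Ici 0) 0 := by
    rw [← continuousWithinAt_Ioi_iff_Ici, ContinuousWithinAt, hH'0]
    exact h0.congr' (eventually_nhdsWithin_of_forall fun x hx => (indicator_of_mem hx H).symm)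
  obtain ⟨γ, hγ, hle⟩ := exists_classKinf_ge_of_monotone hH' hH'0 h0'
  exact ⟨γ, hγ, fun δ hδ => indicator_of_mem hδ H ▸ hle δ hδ.le⟩

end Majorant

section DecayTime

variable {w : ℝ → ℝ}

/-- Junk value 0 when the set is unbounded. -/
noncomputable def decayTime (w : ℝ → ℝ) (ε : ℝ) : ℝ :=
  sSup {T | 0 ≤ T ∧ ε ≤ w T}

theorem decayTime_nonneg (w : ℝ → ℝ) (ε : ℝ) : 0 ≤ decayTime w ε :=
  Real.sSup_nonneg fun _ hT => hT.1

theorem bddAbove_decayTime_set (hw : Tendsto w atTop (𝓝 0)) {ε : ℝ} (hε : 0 < ε) :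
    BddAbove {T | 0 ≤ T ∧ ε ≤ w T} := by
  obtain ⟨N, hN⟩ := eventually_atTop.mp (hw.eventually_lt_const hε)
  exact ⟨N, fun T hT => le_of_not_gt fun hNT => (hN T hNT.le).not_ge hT.2⟩

theorem le_apply_of_lt_decayTime (hw : AntitoneOn w (Ici 0)) {ε r : ℝ} (hr : 0 ≤ r)
    (hrT : r < decayTime w ε) : ε ≤ w r := by
  have hne : {T | 0 ≤ T ∧ ε ≤ w T}.Nonempty := by
    by_contra h
    rw [not_nonempty_iff_eq_empty] at h
    simp only [decayTime, h, Real.sSup_empty] at hrT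
    exact hrT.not_ge hr
  obtain ⟨T, hT, hrT⟩ := exists_lt_of_lt_csSup hne hrT
  exact hT.2.trans (hw hr hT.1 hrT.le)

theorem le_decayTime (hw : Tendsto w atTop (𝓝 0)) {ε T : ℝ} (hε : 0 < ε) (hT : 0 ≤ T)
    (hεT : ε ≤ w T) : T ≤ decayTime w ε :=
  le_csSup (bddAbove_decayTime_set hw hε) ⟨hT, hεT⟩

theorem decayTime_antitoneOn (hw : Tendsto w atTop (𝓝 0)) :
    AntitoneOn (decayTime w) (Ioi 0) := by
  intro a ha b _ hab
  rcases eq_empty_or_nonempty {T | 0 ≤ T ∧ b ≤ w T} with h | h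
  · simp only [decayTime, h, Real.sSup_empty]
    exact decayTime_nonneg w a
  · exact csSup_le_csSup (bddAbove_decayTime_set hw ha) h fun T hT => ⟨hT.1, hab.trans hT.2⟩

theorem tendsto_decayTime (hpos : ∀ t ≥ 0, 0 < w t) (hw : Tendsto w atTop (𝓝 0)) :
    Tendsto (decayTime w) (𝓝[>] 0) atTop := by
  refine tendsto_atTop.mpr fun M => ?_
  filter_upwards [Ioo_mem_nhdsGT (hpos _ (le_max_right M 0))] with ε hε
  exact (le_max_left M 0).trans (le_decayTime hw hε.1 (le_max_right M 0) hε.2.le)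

end DecayTime

section FadingGain

variable {β : ℝ → ℝ → ℝ} {γ w : ℝ → ℝ} {B : ℝ}

noncomputable def fadingGain (β : ℝ → ℝ → ℝ) (γ w : ℝ → ℝ) (B δ : ℝ) : ℝ :=
  β B (decayTime w √δ / 2) + γ √δ

theorem fadingGain_monotoneOn (hβ : ClassKL β) (hγ : ClassKinf γ) (hB : 0 < B)
    (hw : Tendsto w atTop (𝓝 0)) : MonotoneOn (fadingGain β γ w B) (Ioi 0) := by
  intro a ha b hb hab
  have hsqrt : √a ≤ √b := Real.sqrt_le_sqrt hab
  have hdecay : decayTime w √b ≤ decayTime w √a :=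
    decayTime_antitoneOn hw (Real.sqrt_pos_of_pos ha) (Real.sqrt_pos_of_pos hb) hsqrt
  have hhalf : ∀ ε, 0 ≤ decayTime w ε / 2 := fun ε =>
    div_nonneg (decayTime_nonneg w ε) zero_le_two
  exact add_le_add (hβ.antitoneOn_right hB (hhalf _) (hhalf _) (by linarith))
    (hγ.monotoneOn (Real.sqrt_nonneg a) (Real.sqrt_nonneg b) hsqrt)

theorem tendsto_fadingGain (hβ : ClassKL β) (hγ : ClassKinf γ) (hB : 0 < B)
    (hpos : ∀ t ≥ 0, 0 < w t) (hw : Tendsto w atTop (𝓝 0)) :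
    Tendsto (fadingGain β γ w B) (𝓝[>] 0) (𝓝 0) := by
  have hsqrt : Tendsto Real.sqrt (𝓝[>] 0) (𝓝[>] 0) :=
    tendsto_nhdsWithin_of_tendsto_nhds_of_eventually_within _
      ((Real.continuous_sqrt.tendsto' 0 0 Real.sqrt_zero).mono_left nhdsWithin_le_nhds)
      (eventually_nhdsWithin_of_forall fun _ hδ => Real.sqrt_pos_of_pos hδ)
  have hβ_part := (hβ.tendsto_atTop hB).comp
    (((tendsto_decayTime hpos hw).comp hsqrt).atTop_div_const two_pos)
  have hγ_part : Tendsto (fun δ => γ √δ) (𝓝[>] 0) (𝓝 0) := by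
    have := (hγ.1 0 self_mem_Ici).tendsto.comp
      (tendsto_nhdsWithin_mono_right (Ioi_subset_Ici_self) hsqrt)
    rwa [hγ.apply_zero] at this
  have h := hβ_part.add hγ_part
  rw [add_zero] at h
  exact h

end FadingGain

section ISS

variable {β : ℝ → ℝ → ℝ} {γ V μ w : ℝ → ℝ} {t0 : ℝ}

/-- `V` stands for `t ↦ ‖x(t)‖_A` and `μ` for `s ↦ ‖u(s)‖`. -/
def IsISSFrom (β : ℝ → ℝ → ℝ) (γ V μ : ℝ → ℝ) (t0 : ℝ) : Prop :=
  ∀ t1 t, t0 ≤ t1 → t1 ≤ t → V t ≤ β (V t1) (t - t1) + γ (sSup (μ '' Ico t1 t))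

namespace IsISSFrom

theorem le_of_input_le (h : IsISSFrom β γ V μ t0) (hγ : ClassKinf γ) (hμ : ∀ s, 0 ≤ μ s)
    {t1 t C : ℝ} (h01 : t0 ≤ t1) (h1 : t1 ≤ t) (hC : 0 ≤ C) (hμC : ∀ s ∈ Ico t1 t, μ s ≤ C) :
    V t ≤ β (V t1) (t - t1) + γ C :=
  (h t1 t h01 h1).trans <| add_le_add_right
    (hγ.apply_sSup_le (forall_mem_image.2 fun s _ => hμ s) (forall_mem_image.2 hμC) hC) _

theorem le_of_weighted_input_nonpos (h : IsISSFrom β γ V μ t0) (hγ : ClassKinf γ)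
    (hμ : ∀ s, 0 ≤ μ s) {t : ℝ} (hw : ∀ s ∈ Ico t0 t, 0 < w (t - s)) (ht : t0 ≤ t)
    (hμw : ∀ s ∈ Ico t0 t, μ s * w (t - s) ≤ 0) : V t ≤ β (V t0) (t - t0) := by
  have hno_input : ∀ s ∈ Ico t0 t, μ s ≤ 0 := fun s hs =>
    le_of_mul_le_mul_right ((hμw s hs).trans (zero_mul _).ge) (hw s hs)
  simpa [hγ.apply_zero] using h.le_of_input_le hγ hμ le_rfl ht le_rfl hno_input

theorem le_of_initial_le_of_input_le (h : IsISSFrom β γ V μ t0) (hβ : ClassKL β) (hγ : ClassKinf γ)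
    (hV : ∀ t, 0 ≤ V t) (hμ : ∀ s, 0 ≤ μ s) {Mx0 Mu : ℝ} (hMx0 : 0 < Mx0) (hMu : 0 ≤ Mu)
    (hx0 : V t0 ≤ Mx0) (hu : ∀ s ≥ t0, μ s ≤ Mu) {t : ℝ} (ht : t0 ≤ t) :
    V t ≤ β Mx0 0 + γ Mu := by
  have hdt : 0 ≤ t - t0 := sub_nonneg.2 ht
  calc V t ≤ β (V t0) (t - t0) + γ Mu :=
        h.le_of_input_le hγ hμ le_rfl ht hMu fun s hs => hu s hs.1
    _ ≤ β Mx0 (t - t0) + γ Mu :=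
        add_le_add_left (hβ.monotoneOn_left hdt (hV t0) hMx0.le hx0) _
    _ ≤ β Mx0 0 + γ Mu := add_le_add_left (hβ.antitoneOn_right hMx0 self_mem_Ici hdt hdt) _

theorem le_add_fadingGain (h : IsISSFrom β γ V μ t0) (hβ : ClassKL β) (hγ : ClassKinf γ)
    (hV : ∀ t, 0 ≤ V t) (hμ : ∀ s, 0 ≤ μ s) (hw : AntitoneOn w (Ici 0)) {B : ℝ}
    (hB : ∀ s ≥ t0, V s ≤ B) {t δ : ℝ} (ht : t0 < t) (hδ : 0 < δ)
    (hμw : ∀ s ∈ Ico t0 t, μ s * w (t - s) ≤ δ) :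
    V t ≤ β (V t0) (t - t0) + fadingGain β γ w B δ := by
  set T := decayTime w √δ
  have hB0 : 0 ≤ B := (hV t0).trans (hB t0 le_rfl)
  have hT : 0 ≤ T / 2 := div_nonneg (decayTime_nonneg w _) zero_le_two
  have hinput : ∀ s ∈ Ico t0 t, t - T / 2 ≤ s → μ s ≤ √δ := by
    intro s hs hTs
    have hws : √δ ≤ w (t - s) :=
      le_apply_of_lt_decayTime hw (sub_nonneg.2 hs.2.le) (by linarith [hs.2])
    refine le_of_mul_le_mul_right ?_ (Real.sqrt_pos_of_pos hδ)
    calc μ s * √δ ≤ μ s * w (t - s) := mul_le_mul_of_nonneg_left hws (hμ s)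
      _ ≤ δ := hμw s hs
      _ = √δ * √δ := (Real.mul_self_sqrt hδ.le).symm
  have hβ_nonneg := hβ.nonneg (hV t0) (sub_nonneg.2 ht.le)
  unfold fadingGain
  rcases le_total (t - T / 2) t0 with hle | hle
  · have hest := h.le_of_input_le hγ hμ le_rfl ht.le (Real.sqrt_nonneg δ)
      fun s hs => hinput s hs (hle.trans hs.1)
    linarith [hβ.nonneg hB0 hT]
  · have hest := h.le_of_input_le hγ hμ hle (by linarith) (Real.sqrt_nonneg δ)
      fun s hs => hinput s ⟨hle.trans hs.1, hs.2⟩ hs.1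
    rw [sub_sub_cancel] at hest
    linarith [hβ.monotoneOn_left hT (hV _) hB0 (hB _ hle)]

end IsISSFrom

end ISS

theorem stmt6_general {n m : ℕ} (A : Set (Fin n → ℝ))
    (β : ℝ → ℝ → ℝ) (γhat : ℝ → ℝ) (hβ : ClassKL β) (hγ : ClassKinf γhat)
    (Mx0 Mu : ℝ) (hMx0 : 0 < Mx0) (hMu : 0 < Mu)
    (w : ℝ → ℝ) (hw : ∀ t ≥ (0 : ℝ), 0 < w t ∧ w t ≤ 1)
    (hwdec : AntitoneOn w (Set.Ici 0)) (hwlim : Tendsto w atTop (nhds 0)) :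
    ∃ γ : ℝ → ℝ, ClassKinf γ ∧
      ∀ (t0 : ℝ) (x : ℝ → Fin n → ℝ) (u : ℝ → Fin m → ℝ),
        (∀ t1 t, t0 ≤ t1 → t1 ≤ t →
          Metric.infDist (x t) A ≤ β (Metric.infDist (x t1) A) (t - t1) +
            γhat (sSup ((fun s => ‖u s‖) '' Set.Ico t1 t))) →
        Metric.infDist (x t0) A ≤ Mx0 →
        (∀ s ≥ t0, ‖u s‖ ≤ Mu) →
        ∀ t > t0, Metric.infDist (x t) A ≤
          β (Metric.infDist (x t0) A) (t - t0) +
          γ (sSup ((fun s => ‖u s‖ * w (t - s)) '' Set.Ico t0 t)) := by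
  have hB : 0 < β Mx0 0 + γhat Mu := add_pos_of_pos_of_nonneg (hβ.pos hMx0) (hγ.nonneg hMu.le)
  have hpos : ∀ t ≥ 0, 0 < w t := fun t ht => (hw t ht).1
  obtain ⟨γ, hγK, hγ_ge⟩ := exists_classKinf_ge_of_monotoneOn_Ioi
    (fadingGain_monotoneOn hβ hγ hB hwlim) (tendsto_fadingGain hβ hγ hB hpos hwlim)
  refine ⟨γ, hγK, fun t0 x u hISS hx0 hu t ht => ?_⟩
  have hISS : IsISSFrom β γhat (fun t => Metric.infDist (x t) A) (fun s => ‖u s‖) t0 := hISS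
  have hV : ∀ t, 0 ≤ Metric.infDist (x t) A := fun _ => Metric.infDist_nonneg
  have hμ : ∀ s, 0 ≤ ‖u s‖ := fun _ => norm_nonneg _
  set δ := sSup ((fun s => ‖u s‖ * w (t - s)) '' Ico t0 t)
  have hw_pos : ∀ s ∈ Ico t0 t, 0 < w (t - s) := fun s hs => hpos _ (sub_nonneg.2 hs.2.le)
  have hμw : ∀ s ∈ Ico t0 t, ‖u s‖ * w (t - s) ≤ δ := fun s hs =>
    le_csSup ⟨Mu, forall_mem_image.2 fun s hs =>
      (mul_le_of_le_one_right (hμ s) (hw _ (sub_nonneg.2 hs.2.le)).2).trans (hu s hs.1)⟩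
      (mem_image_of_mem _ hs)
  have hδ_nonneg : 0 ≤ δ :=
    Real.sSup_nonneg (forall_mem_image.2 fun s hs => mul_nonneg (hμ s) (hw_pos s hs).le)
  rcases hδ_nonneg.eq_or_lt with hδ | hδ
  · rw [← hδ, hγK.apply_zero, add_zero]
    exact hISS.le_of_weighted_input_nonpos hγ hμ hw_pos ht.le (hδ ▸ hμw)
  · have hbound := fun s (hs : s ≥ t0) =>
      hISS.le_of_initial_le_of_input_le hβ hγ hV hμ hMx0 hMu.le hx0 hu hs
    calc _ ≤ _ := hISS.le_add_fadingGain hβ hγ hV hμ hwdec hbound ht hδ hμw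
      _ ≤ _ := add_le_add_right (hγ_ge δ hδ) _

/-- Decaying-memory ISS estimate (Lemma 2): if the ISS estimate with pair `(β, γ̂)` for a
closed set `A` holds from every initial time, then for any bounds `M_{x0}`, `M_u` and any
decreasing weight `w : [0,∞) → (0,1]` tending to 0, there is a single `γ ∈ 𝒦_∞` such that
`‖x(t)‖_A ≤ β(‖x(t_0)‖_A, t - t_0) + γ(δ_t)` with
`δ_t = sup_{s ∈ [t_0, t)} ‖u(s)‖ w(t - s)`, for all solutions obeying the bounds. -/
theorem stmt6 {n m : ℕ} (A : Set (Fin n → ℝ)) (hA : IsClosed A)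
    (β : ℝ → ℝ → ℝ) (γhat : ℝ → ℝ) (hβ : ClassKL β) (hγ : ClassKinf γhat)
    (Mx0 Mu : ℝ) (hMx0 : 0 < Mx0) (hMu : 0 < Mu)
    (w : ℝ → ℝ) (hw : ∀ t ≥ (0 : ℝ), 0 < w t ∧ w t ≤ 1)
    (hwdec : AntitoneOn w (Set.Ici 0)) (hwlim : Tendsto w atTop (nhds 0)) :
    ∃ γ : ℝ → ℝ, ClassKinf γ ∧
      ∀ (t0 : ℝ) (x : ℝ → Fin n → ℝ) (u : ℝ → Fin m → ℝ),
        (∀ t1 t, t0 ≤ t1 → t1 ≤ t →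
          Metric.infDist (x t) A ≤ β (Metric.infDist (x t1) A) (t - t1) +
            γhat (sSup ((fun s => ‖u s‖) '' Set.Ico t1 t))) →
        Metric.infDist (x t0) A ≤ Mx0 →
        (∀ s ≥ t0, ‖u s‖ ≤ Mu) →
        ∀ t > t0, Metric.infDist (x t) A ≤
          β (Metric.infDist (x t0) A) (t - t0) +
          γ (sSup ((fun s => ‖u s‖ * w (t - s)) '' Set.Ico t0 t)) :=
  stmt6_general A β γhat hβ hγ Mx0 Mu hMx0 hMu w hw hwdec hwlim
end
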